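/- arXiv:1103.5591 — 4 statements merged into one kernel-verified Lean document; each statement's English description precedes it below -/
import Mathlib

section
/- Let D ⊆ B be Banach spaces with ‖·‖_D ≥ ‖·‖_B, let {U^{t,r}_n} (n ∈ ℕ) and {U^{t,r}} be backward propagators on B, each leaving D invariant and uniformly bounded as operators D → D by a constant C, generated respectively by families {A^n_t} and {A_t} of bounded operators D → B in the sense that d/ds U^{t,s}_n f = U^{t,s}_n A^n_s f and d/ds U^{t,s} f = U^{t,s} A_s f for f ∈ D (and the analogous backward derivative equations). Then for every g ∈ D and t ≤ r, (U^{t,r}_n − U^{t,r}) g = ∫_t^r U^{t,s}_n (A^n_s − A_s) U^{s,r} g ds, and consequently ‖(U^{t,r}_n − U^{t,r}) g‖_B ≤ C² (r−t) · sup_{s∈[t,r]} ‖A^n_s − A_s‖_{D→B} · ‖g‖_D. -/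
/-!
The identity is the fundamental theorem of calculus for `ψ s = U_n^{t,s} U^{s,r} g` on `[t, r]`,
whose right derivative is `U_n^{t,s} (A^n_s - A_s) U^{s,r} g` by a product rule. The forward
equation for `U_n` only holds on `D`, while the derivative `-A_s U^{s,r} g` of the second factor
merely lies in the closure of `D` in `B`; because the `U_n^{t,s}` are uniformly bounded, their
strong right continuity on `D` extends to that closure, and this is what makes the product rule
work. The estimate then bounds the integrand by `C · K · C ‖g‖`.
-/

open Filter Topology Set

section BoundedFamilies

variable {α E F : Type*} [NormedAddCommGroup E] [NormedSpace ℝ E]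
  [NormedAddCommGroup F] [NormedSpace ℝ F]

theorem tendsto_clm_apply_of_norm_le {l : Filter α} {T : α → E →L[ℝ] F} {w : α → E} {x : E}
    {y : F} {C : ℝ} (hT : Tendsto (fun a => T a x) l (𝓝 y)) (hw : Tendsto w l (𝓝 x))
    (hb : ∀ᶠ a in l, ‖T a‖ ≤ C) :
    Tendsto (fun a => T a (w a)) l (𝓝 y) := by
  have hsmall : Tendsto (fun a => T a (w a - x)) l (𝓝 0) := by
    refine squeeze_zero_norm' ?_ (by simpa using (hw.sub_const x).norm.const_mul C)
    filter_upwards [hb] with a ha using (T a).le_of_opNorm_le ha _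
  simpa using hT.add hsmall

theorem tendsto_clm_apply_of_mem_closure {l : Filter α} {T : α → E →L[ℝ] F} {T₀ : E →L[ℝ] F}
    {C : ℝ} {S : Set E} (hb : ∀ a, ‖T a‖ ≤ C)
    (hS : ∀ x ∈ S, Tendsto (fun a => T a x) l (𝓝 (T₀ x))) {x : E} (hx : x ∈ closure S) :
    Tendsto (fun a => T a x) l (𝓝 (T₀ x)) :=
  have hequi : Equicontinuous fun a => ⇑(T a) :=
    ((NormedSpace.equicontinuous_TFAE T).out 1 5).mpr (⟨C, hb⟩ : ∃ C, ∀ a, ‖T a‖ ≤ C)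
  (hequi x).tendsto_of_mem_closure (T₀.continuous.continuousAt.mono_left nhdsWithin_le_nhds)
    hS hx

theorem hasDerivWithinAt_clm_apply_of_norm_le {T : ℝ → E →L[ℝ] F} {w : ℝ → E} {S : Set ℝ}
    {x : ℝ} {T' : F} {w' : E} {C : ℝ} (hT : HasDerivWithinAt (fun s => T s (w x)) T' S x)
    (hw : HasDerivWithinAt w w' S x) (hb : ∀ᶠ s in 𝓝[S] x, ‖T s‖ ≤ C)
    (hTw' : Tendsto (fun s => T s w') (𝓝[S] x) (𝓝 (T x w'))) :
    HasDerivWithinAt (fun s => T s (w s)) (T' + T x w') S x := by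
  rw [hasDerivWithinAt_iff_tendsto_slope] at hT hw ⊢
  have hslope : slope (fun s => T s (w s)) x
      = fun s => slope (fun s => T s (w x)) x s + T s (slope w x s) := by
    ext s
    simp only [slope_def_module, map_smul, map_sub, ← smul_add]
    congr 1
    abel
  have hmono : 𝓝[S \ {x}] x ≤ 𝓝[S] x := nhdsWithin_mono _ sdiff_subset
  rw [hslope]
  exact hT.add (tendsto_clm_apply_of_norm_le (hTw'.mono_left hmono) hw (hb.filter_mono hmono))

end BoundedFamilies

theorem HasDerivAt.mem_closure_of_forall_mem {𝕜 E : Type*} [NontriviallyNormedField 𝕜]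
    [NormedAddCommGroup E] [NormedSpace 𝕜 E] {f : 𝕜 → E} {f' : E} {x : 𝕜}
    (hf : HasDerivAt f f' x) {p : Submodule 𝕜 E} (hp : ∀ y, f y ∈ p) :
    f' ∈ closure (p : Set E) := by
  rw [← hf.deriv]
  refine closure_mono ?_ (range_deriv_subset_closure_span_image f dense_univ ⟨x, rfl⟩)
  rw [image_univ, SetLike.coe_subset_coe, Submodule.span_le]
  rintro _ ⟨y, rfl⟩
  exact hp y

theorem norm_intervalIntegral_clm_apply_apply_apply_le {E F G H : Type*}
    [NormedAddCommGroup E] [NormedSpace ℝ E] [NormedAddCommGroup F] [NormedSpace ℝ F]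
    [NormedAddCommGroup G] [NormedSpace ℝ G] [NormedAddCommGroup H] [NormedSpace ℝ H]
    {P : ℝ → G →L[ℝ] H} {Δ : ℝ → F →L[ℝ] G} {V : ℝ → E →L[ℝ] F} {a b c t r : ℝ}
    (htr : t ≤ r) (hP : ∀ s ∈ Icc t r, ‖P s‖ ≤ a) (hΔ : ∀ s ∈ Icc t r, ‖Δ s‖ ≤ b)
    (hV : ∀ s ∈ Icc t r, ‖V s‖ ≤ c) (x : E) :
    ‖∫ s in t..r, P s (Δ s (V s x))‖ ≤ a * b * c * (r - t) * ‖x‖ := by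
  have hbound : ∀ s ∈ uIoc t r, ‖P s (Δ s (V s x))‖ ≤ a * (b * (c * ‖x‖)) := by
    intro s hs
    rw [uIoc_of_le htr] at hs
    have hs' := Ioc_subset_Icc_self hs
    exact (P s).le_of_opNorm_le_of_le (hP s hs')
      ((Δ s).le_of_opNorm_le_of_le (hΔ s hs') ((V s).le_of_opNorm_le (hV s hs') x))
  calc ‖∫ s in t..r, P s (Δ s (V s x))‖ ≤ a * (b * (c * ‖x‖)) * |r - t| :=
        intervalIntegral.norm_integral_le_of_norm_le_const hbound
    _ = a * b * c * (r - t) * ‖x‖ := by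
        rw [abs_of_nonneg (sub_nonneg.2 htr)]
        ring

section Propagator

variable {D B : Type*} [NormedAddCommGroup D] [NormedSpace ℝ D]
  [NormedAddCommGroup B] [NormedSpace ℝ B]
  {ι : D →L[ℝ] B} {P : ℝ → ℝ → B →L[ℝ] B} {G : ℝ → D →L[ℝ] B} {C : ℝ}

theorem tendsto_propagator_apply_of_mem_closure
    (hid : ∀ t, P t t = ContinuousLinearMap.id ℝ B)
    (hchain : ∀ t s r, t ≤ s → s ≤ r → (P t s).comp (P s r) = P t r)
    (hb : ∀ t s, t ≤ s → ‖P t s‖ ≤ C) {S : Set B} {s₀ : ℝ}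
    (hS : ∀ x ∈ S, ContinuousWithinAt (fun s => P s₀ s x) (Ici s₀) s₀)
    {t : ℝ} (hts₀ : t ≤ s₀) {v : B} (hv : v ∈ closure S) :
    Tendsto (fun s => P t s v) (𝓝[≥] s₀) (𝓝 (P t s₀ v)) := by
  have hstart : Tendsto (fun s => P s₀ s v) (𝓝[≥] s₀) (𝓝 v) := by
    rw [tendsto_nhdsWithin_iff_subtype self_mem_Ici]
    refine tendsto_clm_apply_of_mem_closure (T₀ := ContinuousLinearMap.id ℝ B)
      (fun s : Ici s₀ => hb s₀ s s.2) (fun x hx => ?_) hv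
    have := hS x hx
    rwa [ContinuousWithinAt, tendsto_nhdsWithin_iff_subtype self_mem_Ici, hid] at this
  refine (((P t s₀).continuous.tendsto v).comp hstart).congr' ?_
  filter_upwards [self_mem_nhdsWithin] with s hs
  rw [Function.comp_apply, ← hchain t s₀ s hts₀ hs, ContinuousLinearMap.comp_apply]

variable (hgen : ∀ t f s, t ≤ s → HasDerivAt (fun u => P t u (ι f)) (P t s (G s f)) s)
include hgen

theorem continuousWithinAt_propagator_apply (hb : ∀ t s, t ≤ s → ‖P t s‖ ≤ C)
    {w : ℝ → B} {t s₀ : ℝ} {f₀ : D} (hts₀ : t ≤ s₀) (hw : ContinuousAt w s₀) (hw₀ : w s₀ = ι f₀) :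
    ContinuousWithinAt (fun s => P t s (w s)) (Ici t) s₀ := by
  have hT : ContinuousWithinAt (fun s => P t s (w s₀)) (Ici t) s₀ := by
    rw [hw₀]
    exact (hgen t f₀ s₀ hts₀).continuousAt.continuousWithinAt
  refine tendsto_clm_apply_of_norm_le (C := C) hT hw.continuousWithinAt ?_
  filter_upwards [self_mem_nhdsWithin] with s hs using hb t s hs

theorem hasDerivWithinAt_propagator_apply (hid : ∀ t, P t t = ContinuousLinearMap.id ℝ B)
    (hchain : ∀ t s r, t ≤ s → s ≤ r → (P t s).comp (P s r) = P t r)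
    (hb : ∀ t s, t ≤ s → ‖P t s‖ ≤ C) {w : ℝ → B} {w' : B} {t s₀ : ℝ} {f₀ : D}
    (hts₀ : t ≤ s₀) (hw : HasDerivAt w w' s₀) (hw₀ : w s₀ = ι f₀)
    (hrange : ∀ s, w s ∈ LinearMap.range (ι : D →ₗ[ℝ] B)) :
    HasDerivWithinAt (fun s => P t s (w s)) (P t s₀ (G s₀ f₀) + P t s₀ w') (Ici s₀) s₀ := by
  have hT : HasDerivWithinAt (fun s => P t s (w s₀)) (P t s₀ (G s₀ f₀)) (Ici s₀) s₀ := by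
    rw [hw₀]
    exact (hgen t f₀ s₀ hts₀).hasDerivWithinAt
  refine hasDerivWithinAt_clm_apply_of_norm_le (C := C) hT hw.hasDerivWithinAt ?_ ?_
  · filter_upwards [self_mem_nhdsWithin] with s hs using hb t s (hts₀.trans hs)
  · refine tendsto_propagator_apply_of_mem_closure hid hchain hb ?_ hts₀
      (hw.mem_closure_of_forall_mem hrange)
    rintro _ ⟨f, rfl⟩
    exact (hgen s₀ f s₀ le_rfl).continuousAt.continuousWithinAt

end Propagator

theorem propagator_comparison_identity_and_estimate_general
    {D B : Type*} [NormedAddCommGroup D] [NormedSpace ℝ D]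
    [NormedAddCommGroup B] [NormedSpace ℝ B] [CompleteSpace B]
    (ι : D →L[ℝ] B)
    (C : ℝ)
    (Un : ℕ → ℝ → ℝ → B →L[ℝ] B) (U : ℝ → ℝ → B →L[ℝ] B)
    (UD : ℝ → ℝ → D →L[ℝ] D)
    (An : ℕ → ℝ → D →L[ℝ] B) (A : ℝ → D →L[ℝ] B)
    -- the propagators leave D invariant:
    (hcompat : ∀ (t s : ℝ) (f : D), U t s (ι f) = ι (UD t s f))
    -- uniform bounds on B and on D:
    (hUnB : ∀ (n : ℕ) (t s : ℝ), t ≤ s → ‖Un n t s‖ ≤ C)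
    (hUDbd : ∀ t s : ℝ, t ≤ s → ‖UD t s‖ ≤ C)
    -- propagator (chain rule) identities:
    (hidn : ∀ (n : ℕ) (t : ℝ), Un n t t = ContinuousLinearMap.id ℝ B)
    (hid : ∀ t : ℝ, U t t = ContinuousLinearMap.id ℝ B)
    (hchainn : ∀ (n : ℕ) (t s r : ℝ), t ≤ s → s ≤ r →
      (Un n t s).comp (Un n s r) = Un n t r)
    -- generation: forward derivative equations for Un, backward ones for U, on D:
    (hgen_fwd : ∀ (n : ℕ) (t : ℝ) (f : D) (s : ℝ), t ≤ s →
      HasDerivAt (fun u : ℝ => Un n t u (ι f)) (Un n t s (An n s f)) s)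
    (hgen_bwd : ∀ (r : ℝ) (f : D) (s : ℝ), s ≤ r →
      HasDerivAt (fun u : ℝ => U u r (ι f)) (-(A s (UD s r f))) s)
    (n : ℕ) (t r : ℝ) (htr : t ≤ r) (g : D)
    (hint : IntervalIntegrable
      (fun s : ℝ => Un n t s ((An n s - A s) (UD s r g))) MeasureTheory.volume t r) :
    Un n t r (ι g) - U t r (ι g) =
      (∫ s in t..r, Un n t s ((An n s - A s) (UD s r g))) ∧
    ∀ K : ℝ, (∀ s ∈ Set.Icc t r, ‖An n s - A s‖ ≤ K) →
      ‖Un n t r (ι g) - U t r (ι g)‖ ≤ C ^ 2 * (r - t) * K * ‖g‖ := by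
  set ψ : ℝ → B := fun s => Un n t s (U s r (ι g))
  have hrange : ∀ s, U s r (ι g) ∈ LinearMap.range (ι : D →ₗ[ℝ] B) := fun s =>
    ⟨UD s r g, (hcompat s r g).symm⟩
  have hcont : ContinuousOn ψ (Icc t r) := fun s hs =>
    (continuousWithinAt_propagator_apply (hgen_fwd n) (hUnB n) hs.1
      (hgen_bwd r g s hs.2).continuousAt (hcompat s r g)).mono Icc_subset_Ici_self
  have hderiv : ∀ s ∈ Ioo t r,
      HasDerivWithinAt ψ (Un n t s ((An n s - A s) (UD s r g))) (Ioi s) s := by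
    intro s hs
    have := hasDerivWithinAt_propagator_apply (hgen_fwd n) (hidn n) (hchainn n) (hUnB n)
      hs.1.le (hgen_bwd r g s hs.2.le) (hcompat s r g) hrange
    convert this.mono Ioi_subset_Ici_self using 1
    simp [sub_eq_add_neg]
  have hidentity : Un n t r (ι g) - U t r (ι g)
      = ∫ s in t..r, Un n t s ((An n s - A s) (UD s r g)) := by
    rw [intervalIntegral.integral_eq_sub_of_hasDeriv_right_of_le htr hcont hderiv hint]
    simp [ψ, hidn, hid]
  refine ⟨hidentity, fun K hK => ?_⟩
  calc ‖Un n t r (ι g) - U t r (ι g)‖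
      ≤ C * K * C * (r - t) * ‖g‖ := hidentity ▸ norm_intervalIntegral_clm_apply_apply_apply_le htr
        (fun s hs => hUnB n t s hs.1) hK (fun s hs => hUDbd s r hs.2) g
    _ = C ^ 2 * (r - t) * K * ‖g‖ := by ring

/-- comparison identity and estimate for two backward propagators
`U_n` and `U` on `B` with common invariant domain `D` (embedded in `B` via a
norm-nonincreasing injection `ι`), generated by `A^n_t` resp. `A_t`:
`(U_n^{t,r} − U^{t,r}) g = ∫_t^r U_n^{t,s}(A^n_s − A_s)U^{s,r} g ds` and
`‖(U_n^{t,r} − U^{t,r}) g‖_B ≤ C²(r−t) sup_s ‖A^n_s − A_s‖_{D→B} ‖g‖_D`. -/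
theorem propagator_comparison_identity_and_estimate
    {D B : Type*} [NormedAddCommGroup D] [NormedSpace ℝ D]
    [NormedAddCommGroup B] [NormedSpace ℝ B] [CompleteSpace B]
    (ι : D →L[ℝ] B) (hιinj : Function.Injective ι) (hιnorm : ∀ f : D, ‖ι f‖ ≤ ‖f‖)
    (C : ℝ) (hC : 0 ≤ C)
    (Un : ℕ → ℝ → ℝ → B →L[ℝ] B) (U : ℝ → ℝ → B →L[ℝ] B)
    (UnD : ℕ → ℝ → ℝ → D →L[ℝ] D) (UD : ℝ → ℝ → D →L[ℝ] D)
    (An : ℕ → ℝ → D →L[ℝ] B) (A : ℝ → D →L[ℝ] B)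
    -- the propagators leave D invariant:
    (hcompatn : ∀ (n : ℕ) (t s : ℝ) (f : D), Un n t s (ι f) = ι (UnD n t s f))
    (hcompat : ∀ (t s : ℝ) (f : D), U t s (ι f) = ι (UD t s f))
    -- uniform bounds on B and on D:
    (hUnB : ∀ (n : ℕ) (t s : ℝ), t ≤ s → ‖Un n t s‖ ≤ C)
    (hUB : ∀ t s : ℝ, t ≤ s → ‖U t s‖ ≤ C)
    (hUnDbd : ∀ (n : ℕ) (t s : ℝ), t ≤ s → ‖UnD n t s‖ ≤ C)
    (hUDbd : ∀ t s : ℝ, t ≤ s → ‖UD t s‖ ≤ C)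
    -- propagator (chain rule) identities:
    (hidn : ∀ (n : ℕ) (t : ℝ), Un n t t = ContinuousLinearMap.id ℝ B)
    (hid : ∀ t : ℝ, U t t = ContinuousLinearMap.id ℝ B)
    (hchainn : ∀ (n : ℕ) (t s r : ℝ), t ≤ s → s ≤ r →
      (Un n t s).comp (Un n s r) = Un n t r)
    (hchain : ∀ t s r : ℝ, t ≤ s → s ≤ r → (U t s).comp (U s r) = U t r)
    -- generation: forward derivative equations for Un, backward ones for U, on D:
    (hgen_fwd : ∀ (n : ℕ) (t : ℝ) (f : D) (s : ℝ), t ≤ s →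
      HasDerivAt (fun u : ℝ => Un n t u (ι f)) (Un n t s (An n s f)) s)
    (hgen_bwd : ∀ (r : ℝ) (f : D) (s : ℝ), s ≤ r →
      HasDerivAt (fun u : ℝ => U u r (ι f)) (-(A s (UD s r f))) s)
    (n : ℕ) (t r : ℝ) (htr : t ≤ r) (g : D)
    (hint : IntervalIntegrable
      (fun s : ℝ => Un n t s ((An n s - A s) (UD s r g))) MeasureTheory.volume t r) :
    Un n t r (ι g) - U t r (ι g) =
      (∫ s in t..r, Un n t s ((An n s - A s) (UD s r g))) ∧
    ∀ K : ℝ, (∀ s ∈ Set.Icc t r, ‖An n s - A s‖ ≤ K) →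
      ‖Un n t r (ι g) - U t r (ι g)‖ ≤ C ^ 2 * (r - t) * K * ‖g‖ :=
  propagator_comparison_identity_and_estimate_general ι C Un U UD An A hcompat hUnB hUDbd hidn hid
    hchainn hgen_fwd hgen_bwd n t r htr g hint
end

section
/- Let B, D be Banach spaces as above with {U^{t,r}_n}, {U^{t,r}} backward propagators generated by {A^n_t}, {A_t} on the invariant domain D, all uniformly bounded on B and D. If for each t and each f ∈ D one has A^n_t f → A_t f in the norm of B as n → ∞, and sup_n sup_t ‖A^n_t‖_{D→B} < ∞, then U^{t,r}_n f → U^{t,r} f in B for every f ∈ B (strong convergence on all of B), provided D is dense in B. -/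
/-!
Differentiating `s ↦ Uₙ^{t,s} U^{s,r} g` for `g ∈ D` gives the Duhamel formula
`Uₙ^{t,r} g - U^{t,r} g = ∫_t^r Uₙ^{t,s} (Aₙ_s - A_s) U^{s,r} g ds`. The integrand is bounded
uniformly in `n` and tends to `0` pointwise, so by dominated convergence `Uₙ^{t,r} g → U^{t,r} g`
on `D`. The operators `Uₙ^{t,r}` are uniformly bounded, hence equicontinuous, so the convergence
passes to the closure of `D`, which is all of `B`.
-/

open Filter Set MeasureTheory Topology

section Operators

variable {E F : Type*} [NormedAddCommGroup E] [NormedSpace ℝ E]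
  [NormedAddCommGroup F] [NormedSpace ℝ F] {X : Type*} {l : Filter X}

theorem tendsto_clm_apply_of_bounded {T : X → E →L[ℝ] F} {w : X → E} {w₀ : E} {y : F} {C : ℝ}
    (hT : ∀ᶠ x in l, ‖T x‖ ≤ C) (hw : Tendsto w l (𝓝 w₀))
    (hTw₀ : Tendsto (fun x => T x w₀) l (𝓝 y)) :
    Tendsto (fun x => T x (w x)) l (𝓝 y) := by
  have hdiff : Tendsto (fun x => T x (w x - w₀)) l (𝓝 0) := by
    refine squeeze_zero_norm' ?_
      (by simpa using (tendsto_iff_norm_sub_tendsto_zero.mp hw).const_mul C)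
    filter_upwards [hT] with x hx
    exact (T x).le_of_opNorm_le hx _
  simpa using hdiff.add hTw₀

theorem opNorm_le_of_tendsto_apply [l.NeBot] {T : X → E →L[ℝ] F} {S : E →L[ℝ] F} {C : ℝ}
    (hT : ∀ᶠ x in l, ‖T x‖ ≤ C) (hS : ∀ f, Tendsto (fun x => T x f) l (𝓝 (S f))) :
    ‖S‖ ≤ C := by
  obtain ⟨x, hx⟩ := hT.exists
  refine S.opNorm_le_bound ((norm_nonneg _).trans hx) fun f => ?_
  refine le_of_tendsto (hS f).norm ?_
  filter_upwards [hT] with x hx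
  exact (T x).le_of_opNorm_le hx f

theorem tendsto_clm_apply_of_denseRange {D : Type*} [TopologicalSpace D] {ι : D → E}
    (hdense : DenseRange ι) {T : X → E →L[ℝ] F} {S : E →L[ℝ] F} {C : ℝ}
    (hT : ∀ᶠ x in l, ‖T x‖ ≤ C) (h : ∀ g, Tendsto (fun x => T x (ι g)) l (𝓝 (S (ι g))))
    (f : E) : Tendsto (fun x => T x f) l (𝓝 (S f)) := by
  -- Restricted to the indices where the bound holds, the family is equicontinuous.
  set P := {x | ‖T x‖ ≤ C}
  have hequi : Equicontinuous fun x : P => ⇑(T x) :=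
    (LipschitzWith.uniformEquicontinuous (fun x : P => ⇑(T x)) C.toNNReal fun x =>
      (T x).lipschitzWith_of_opNorm_le (x.2.trans (Real.le_coe_toNNReal C))).equicontinuous
  have hrange : range ι ⊆ {f | Tendsto (fun x : P => T x f) (comap (↑) l) (𝓝 (S f))} := by
    rintro _ ⟨g, rfl⟩
    exact (h g).comp tendsto_comap
  have hf := (hequi.isClosed_setOfPred_tendsto S.continuous).closure_subset_iff.mpr hrange
    (hdense f)
  rwa [← map_comap_of_mem (f := l) (m := ((↑) : P → X)) (by rwa [Subtype.range_coe]),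
    tendsto_map'_iff]

theorem HasDerivWithinAt.clm_apply_of_bounded {T : ℝ → E →L[ℝ] F} {v : ℝ → E} {v' : E} {w : F}
    {s : Set ℝ} {x C : ℝ} (hv : HasDerivWithinAt v v' s x)
    (hTv : HasDerivWithinAt (fun u => T u (v x)) w s x)
    (hT : ∀ᶠ u in 𝓝[s] x, ‖T u‖ ≤ C)
    (hTv' : Tendsto (fun u => T u v') (𝓝[s] x) (𝓝 (T x v'))) :
    HasDerivWithinAt (fun u => T u (v u)) (T x v' + w) s x := by
  have hincr : HasDerivWithinAt (fun u => T u (v u - v x)) (T x v') s x := by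
    rw [hasDerivWithinAt_iff_tendsto_slope] at hv ⊢
    have hslope : slope (fun u => T u (v u - v x)) x = fun u => T u (slope v x u) := by
      ext u
      simp [slope_def_module]
    rw [hslope]
    exact tendsto_clm_apply_of_bounded (hT.filter_mono (nhdsWithin_mono _ sdiff_subset)) hv
      (hTv'.mono_left (nhdsWithin_mono _ sdiff_subset))
  convert hincr.add hTv using 1
  ext u
  simp

end Operators

theorem duhamel_integral_eq {D B : Type*} [NormedAddCommGroup D] [NormedSpace ℝ D]
    [NormedAddCommGroup B] [NormedSpace ℝ B] [CompleteSpace B]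
    (ι : D →L[ℝ] B) (hdense : DenseRange ι)
    {V W : ℝ → B →L[ℝ] B} {WD : ℝ → D →L[ℝ] D} {AV AW : ℝ → D →L[ℝ] B} {t r C : ℝ}
    (htr : t ≤ r) (g : D) (hVt : V t = ContinuousLinearMap.id ℝ B)
    (hWr : W r = ContinuousLinearMap.id ℝ B) (hV : ∀ s, t ≤ s → ‖V s‖ ≤ C)
    (hWD : ∀ s, W s (ι g) = ι (WD s g))
    (hVderiv : ∀ f s, t ≤ s → HasDerivAt (fun u => V u (ι f)) (V s (AV s f)) s)
    (hWderiv : ∀ s, s ≤ r → HasDerivAt (fun u => W u (ι g)) (-(AW s (WD s g))) s)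
    (hint : IntervalIntegrable (fun s => V s ((AV s - AW s) (WD s g))) volume t r) :
    ∫ s in t..r, V s ((AV s - AW s) (WD s g)) = V r (ι g) - W t (ι g) := by
  have hderiv : ∀ s ∈ Icc t r, HasDerivWithinAt (fun u => V u (W u (ι g)))
      (V s ((AV s - AW s) (WD s g))) (Icc t r) s := by
    intro s hs
    have hVs : Tendsto (fun u => V u (-(AW s (WD s g)))) (𝓝[Icc t r] s)
        (𝓝 (V s (-(AW s (WD s g))))) :=
      tendsto_clm_apply_of_denseRange hdense
        (eventually_nhdsWithin_of_forall fun u hu => hV u hu.1)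
        (fun f => (hVderiv f s hs.1).continuousAt.continuousWithinAt) _
    have hprod := (hWderiv s hs.2).hasDerivWithinAt.clm_apply_of_bounded
      (by simpa only [hWD] using (hVderiv (WD s g) s hs.1).hasDerivWithinAt)
      (eventually_nhdsWithin_of_forall fun u hu => hV u hu.1) hVs
    convert hprod using 1
    simp [sub_eq_neg_add]
  rw [intervalIntegral.integral_eq_sub_of_hasDerivAt_of_le htr
    (fun s hs => (hderiv s hs).continuousWithinAt)
    (fun s hs => (hderiv s (Ioo_subset_Icc_self hs)).hasDerivAt (Icc_mem_nhds hs.1 hs.2)) hint]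
  simp [hVt, hWr]

theorem tendsto_intervalIntegral_clm_apply_of_tendsto_zero {E F : Type*} [NormedAddCommGroup E]
    [NormedSpace ℝ E] [NormedAddCommGroup F] [NormedSpace ℝ F] {X : Type*} {l : Filter X}
    [l.IsCountablyGenerated] {T : X → ℝ → E →L[ℝ] F} {v : X → ℝ → E} {t r C K : ℝ} (htr : t ≤ r)
    (hT : ∀ n, ∀ s ∈ Ioc t r, ‖T n s‖ ≤ C) (hv : ∀ n, ∀ s ∈ Ioc t r, ‖v n s‖ ≤ K)
    (hv0 : ∀ s ∈ Ioc t r, Tendsto (fun n => v n s) l (𝓝 0))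
    (hint : ∀ n, IntervalIntegrable (fun s => T n s (v n s)) volume t r) :
    Tendsto (fun n => ∫ s in t..r, T n s (v n s)) l (𝓝 0) := by
  have hlim := intervalIntegral.tendsto_integral_filter_of_dominated_convergence (f := 0)
    (bound := fun _ => C * K) (l := l) (F := fun n s => T n s (v n s))
    (Eventually.of_forall fun n =>
      (hint n).1.aestronglyMeasurable.mono_set (by rw [uIoc_of_le htr]))
    (Eventually.of_forall fun n => ae_of_all _ fun s hs => ?_) intervalIntegrable_const
    (ae_of_all _ fun s hs => ?_)
  · simpa using hlim
  · rw [uIoc_of_le htr] at hs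
    exact ((T n s).le_opNorm _).trans
      (mul_le_mul (hT n s hs) (hv n s hs) (norm_nonneg _) ((norm_nonneg _).trans (hT n s hs)))
  · rw [uIoc_of_le htr] at hs
    exact tendsto_clm_apply_of_bounded (Eventually.of_forall fun n => hT n s hs) (hv0 s hs)
      (by simpa using tendsto_const_nhds)

theorem propagators_converge_strongly_of_generators_converge_general
    {D B : Type*} [NormedAddCommGroup D] [NormedSpace ℝ D]
    [NormedAddCommGroup B] [NormedSpace ℝ B] [CompleteSpace B]
    (ι : D →L[ℝ] B)
    (C : ℝ)
    (Un : ℕ → ℝ → ℝ → B →L[ℝ] B) (U : ℝ → ℝ → B →L[ℝ] B)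
    (UD : ℝ → ℝ → D →L[ℝ] D)
    (An : ℕ → ℝ → D →L[ℝ] B) (A : ℝ → D →L[ℝ] B)
    -- the propagators leave D invariant:
    (hcompat : ∀ (t s : ℝ) (f : D), U t s (ι f) = ι (UD t s f))
    -- uniform bounds on B and on D:
    (hUnB : ∀ (n : ℕ) (t s : ℝ), t ≤ s → ‖Un n t s‖ ≤ C)
    (hUDbd : ∀ t s : ℝ, t ≤ s → ‖UD t s‖ ≤ C)
    -- propagator (chain rule) identities:
    (hidn : ∀ (n : ℕ) (t : ℝ), Un n t t = ContinuousLinearMap.id ℝ B)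
    (hid : ∀ t : ℝ, U t t = ContinuousLinearMap.id ℝ B)
    -- generation: forward derivative equations for Un, backward ones for U, on D:
    (hgen_fwd : ∀ (n : ℕ) (t : ℝ) (f : D) (s : ℝ), t ≤ s →
      HasDerivAt (fun u : ℝ => Un n t u (ι f)) (Un n t s (An n s f)) s)
    (hgen_bwd : ∀ (r : ℝ) (f : D) (s : ℝ), s ≤ r →
      HasDerivAt (fun u : ℝ => U u r (ι f)) (-(A s (UD s r f))) s)
    (hdense : DenseRange ι)
    (hint : ∀ (n : ℕ) (t r : ℝ) (g : D), IntervalIntegrable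
      (fun s : ℝ => Un n t s ((An n s - A s) (UD s r g))) MeasureTheory.volume t r)
    -- pointwise strong convergence of the generators, uniform generator bounds:
    (hAconv : ∀ (t : ℝ) (f : D),
      Filter.Tendsto (fun n : ℕ => An n t f) Filter.atTop (nhds (A t f)))
    (hAbd : ∃ M : ℝ, ∀ (n : ℕ) (t : ℝ), ‖An n t‖ ≤ M)
    (t r : ℝ) (htr : t ≤ r) :
    ∀ f : B, Filter.Tendsto (fun n : ℕ => Un n t r f) Filter.atTop (nhds (U t r f)) := by
  obtain ⟨M, hM⟩ := hAbd
  have hA : ∀ s, ‖A s‖ ≤ M := fun s =>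
    opNorm_le_of_tendsto_apply (Eventually.of_forall fun n => hM n s) (hAconv s)
  have hconv_D : ∀ g : D, Tendsto (fun n => Un n t r (ι g)) atTop (𝓝 (U t r (ι g))) := by
    intro g
    have hUDg : ∀ s ∈ Ioc t r, ‖UD s r g‖ ≤ C * ‖g‖ := fun s hs =>
      (UD s r).le_of_opNorm_le (hUDbd s r hs.2) g
    have hdiff_bound : ∀ n, ∀ s ∈ Ioc t r,
        ‖(An n s - A s) (UD s r g)‖ ≤ (M + M) * (C * ‖g‖) := fun n s hs =>
      calc ‖(An n s - A s) (UD s r g)‖ ≤ ‖An n s - A s‖ * (C * ‖g‖) :=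
            (An n s - A s).le_opNorm_of_le (hUDg s hs)
        _ ≤ (M + M) * (C * ‖g‖) :=
            mul_le_mul_of_nonneg_right ((norm_sub_le _ _).trans (add_le_add (hM n s) (hA s)))
              ((norm_nonneg _).trans (hUDg s hs))
    have hduhamel : ∀ n, Un n t r (ι g) =
        U t r (ι g) + ∫ s in t..r, Un n t s ((An n s - A s) (UD s r g)) := fun n => by
      rw [duhamel_integral_eq ι hdense (W := (U · r)) (WD := (UD · r)) htr g (hidn n t) (hid r)
        (hUnB n t) (hcompat · r g) (hgen_fwd n t) (fun s => hgen_bwd r g s) (hint n t r g)]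
      abel
    have hlim := tendsto_intervalIntegral_clm_apply_of_tendsto_zero htr
      (fun n s hs => hUnB n t s hs.1.le) hdiff_bound
      (fun s _ => by simpa using (hAconv s (UD s r g)).sub_const (A s (UD s r g)))
      (fun n => hint n t r g)
    rw [funext hduhamel]
    simpa using (tendsto_const_nhds (x := U t r (ι g))).add hlim
  exact tendsto_clm_apply_of_denseRange hdense
    (Eventually.of_forall fun n => hUnB n t r htr) hconv_D

/-- if the generators `A^n_t f → A_t f` in `B` for each `f ∈ D`,
with a uniform bound on `‖A^n_t‖_{D→B}`, and `D` is dense in `B`, then the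
propagators converge strongly on all of `B`: `U_n^{t,r} f → U^{t,r} f`. -/
theorem propagators_converge_strongly_of_generators_converge
    {D B : Type*} [NormedAddCommGroup D] [NormedSpace ℝ D]
    [NormedAddCommGroup B] [NormedSpace ℝ B] [CompleteSpace B]
    (ι : D →L[ℝ] B) (hιinj : Function.Injective ι) (hιnorm : ∀ f : D, ‖ι f‖ ≤ ‖f‖)
    (C : ℝ) (hC : 0 ≤ C)
    (Un : ℕ → ℝ → ℝ → B →L[ℝ] B) (U : ℝ → ℝ → B →L[ℝ] B)
    (UnD : ℕ → ℝ → ℝ → D →L[ℝ] D) (UD : ℝ → ℝ → D →L[ℝ] D)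
    (An : ℕ → ℝ → D →L[ℝ] B) (A : ℝ → D →L[ℝ] B)
    -- the propagators leave D invariant:
    (hcompatn : ∀ (n : ℕ) (t s : ℝ) (f : D), Un n t s (ι f) = ι (UnD n t s f))
    (hcompat : ∀ (t s : ℝ) (f : D), U t s (ι f) = ι (UD t s f))
    -- uniform bounds on B and on D:
    (hUnB : ∀ (n : ℕ) (t s : ℝ), t ≤ s → ‖Un n t s‖ ≤ C)
    (hUB : ∀ t s : ℝ, t ≤ s → ‖U t s‖ ≤ C)
    (hUnDbd : ∀ (n : ℕ) (t s : ℝ), t ≤ s → ‖UnD n t s‖ ≤ C)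
    (hUDbd : ∀ t s : ℝ, t ≤ s → ‖UD t s‖ ≤ C)
    -- propagator (chain rule) identities:
    (hidn : ∀ (n : ℕ) (t : ℝ), Un n t t = ContinuousLinearMap.id ℝ B)
    (hid : ∀ t : ℝ, U t t = ContinuousLinearMap.id ℝ B)
    (hchainn : ∀ (n : ℕ) (t s r : ℝ), t ≤ s → s ≤ r →
      (Un n t s).comp (Un n s r) = Un n t r)
    (hchain : ∀ t s r : ℝ, t ≤ s → s ≤ r → (U t s).comp (U s r) = U t r)
    -- generation: forward derivative equations for Un, backward ones for U, on D:
    (hgen_fwd : ∀ (n : ℕ) (t : ℝ) (f : D) (s : ℝ), t ≤ s →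
      HasDerivAt (fun u : ℝ => Un n t u (ι f)) (Un n t s (An n s f)) s)
    (hgen_bwd : ∀ (r : ℝ) (f : D) (s : ℝ), s ≤ r →
      HasDerivAt (fun u : ℝ => U u r (ι f)) (-(A s (UD s r f))) s)
    (hdense : DenseRange ι)
    (hint : ∀ (n : ℕ) (t r : ℝ) (g : D), IntervalIntegrable
      (fun s : ℝ => Un n t s ((An n s - A s) (UD s r g))) MeasureTheory.volume t r)
    -- pointwise strong convergence of the generators, uniform generator bounds:
    (hAconv : ∀ (t : ℝ) (f : D),
      Filter.Tendsto (fun n : ℕ => An n t f) Filter.atTop (nhds (A t f)))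
    (hAbd : ∃ M : ℝ, ∀ (n : ℕ) (t : ℝ), ‖An n t‖ ≤ M)
    (t r : ℝ) (htr : t ≤ r) :
    ∀ f : B, Filter.Tendsto (fun n : ℕ => Un n t r f) Filter.atTop (nhds (U t r f)) :=
  propagators_converge_strongly_of_generators_converge_general ι C Un U UD An A hcompat hUnB hUDbd
    hidn hid hgen_fwd hgen_bwd hdense hint hAconv hAbd t r htr
end

section
/- Let B be a Banach space with a dense subspace D that is itself a Banach space with ‖·‖_D ≥ ‖·‖_B. Let {U^{t,r}} be a strongly continuous backward propagator of bounded operators on B leaving D invariant, generated on D by a family {A_t} of bounded operators D → B depending strongly continuously on t. Let ξ_s (s ∈ [t,r]) be a weak-* continuous curve in B* with ξ_t = ξ satisfying d/ds (f, ξ_s) = (A_s f, ξ_s) for all f ∈ D and s ∈ [t,r]. Then for each f ∈ D the function g(s) = (U^{s,r} f, ξ_s) is constant on [t,r]; in particular (f, ξ_r) = (U^{t,r} f, ξ). -/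
/-!
Differentiate `g(s) = (U^{s,r} f, ξ_s)` by the product rule: the backward generation equation
contributes `-(A_s U^{s,r} f, ξ_s)` and the dual equation, applied to `U^{s,r} f ∈ D`, contributes
`+(A_s U^{s,r} f, ξ_s)`. The product rule needs only weak-* regularity of `ξ` because, by
Banach–Steinhaus, a weak-* continuous curve is norm bounded on the compact interval `[t, r]`.
-/

open Filter Topology Asymptotics Set

theorem exists_forall_opNorm_le_of_continuousOn_apply {X 𝕜 E F : Type*} [TopologicalSpace X]
    [NontriviallyNormedField 𝕜] [NormedAddCommGroup E] [NormedSpace 𝕜 E] [CompleteSpace E]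
    [NormedAddCommGroup F] [NormedSpace 𝕜 F] {K : Set X} (hK : IsCompact K)
    {ξ : X → E →L[𝕜] F} (hξ : ∀ x, ContinuousOn (fun u => ξ u x) K) :
    ∃ C, ∀ u ∈ K, ‖ξ u‖ ≤ C := by
  obtain ⟨C, hC⟩ := banach_steinhaus (g := fun u : K => ξ u) fun x =>
    (hK.exists_bound_of_continuousOn (hξ x)).imp fun M hM u => hM u u.2
  exact ⟨C, fun u hu => hC ⟨u, hu⟩⟩

theorem HasDerivWithinAt.clm_apply_of_weakStar {𝕜 E F : Type*} [NontriviallyNormedField 𝕜]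
    [NormedAddCommGroup E] [NormedSpace 𝕜 E] [NormedAddCommGroup F] [NormedSpace 𝕜 F]
    {ξ : 𝕜 → E →L[𝕜] F} {v : 𝕜 → E} {v' : E} {a : F} {S : Set 𝕜} {s : 𝕜} {C : ℝ}
    (hbound : ∀ᶠ u in 𝓝[S] s, ‖ξ u‖ ≤ C)
    (hv : HasDerivWithinAt v v' S s)
    (hξ : HasDerivWithinAt (fun u => ξ u (v s)) a S s)
    (hξv' : ContinuousWithinAt (fun u => ξ u v') S s) :
    HasDerivWithinAt (fun u => ξ u (v u)) (ξ s v' + a) S s := by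
  rw [hasDerivWithinAt_iff_isLittleO] at hv hξ ⊢
  have hremainder : (fun u => ξ u (v u - v s - (u - s) • v')) =o[𝓝[S] s] fun u => u - s :=
    (isBigO_iff.2 ⟨C, by
      filter_upwards [hbound] with u hu using (ξ u).le_of_opNorm_le hu _⟩).trans_isLittleO hv
  have hweak : (fun u => (u - s) • (ξ u v' - ξ s v')) =o[𝓝[S] s] fun u => u - s := by
    have hconv : (fun u => ξ u v' - ξ s v') =o[𝓝[S] s] fun _ => (1 : 𝕜) :=
      (isLittleO_one_iff 𝕜).2 (by simpa using hξv'.tendsto.sub_const (ξ s v'))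
    simpa using (isBigO_refl (fun u => u - s) (𝓝[S] s)).smul_isLittleO hconv
  refine ((hremainder.add hweak).add hξ).congr_left fun u => ?_
  simp only [map_sub, map_smul, smul_add, smul_sub]
  abel

theorem constant_of_hasDerivWithinAt_zero {E : Type*} [NormedAddCommGroup E] [NormedSpace ℝ E]
    {f : ℝ → E} {a b : ℝ} (hf : ∀ x ∈ Icc a b, HasDerivWithinAt f 0 (Icc a b) x) :
    ∀ x ∈ Icc a b, f x = f a :=
  constant_of_has_deriv_right_zero (fun x hx => (hf x hx).continuousWithinAt) fun x hx =>
    (hf x (Ico_subset_Icc_self hx)).mono_of_mem_nhdsWithin (Icc_mem_nhdsGE_of_mem hx)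

theorem dual_pairing_constant_along_propagator_general
    {D B : Type*} [NormedAddCommGroup D] [NormedSpace ℝ D]
    [NormedAddCommGroup B] [NormedSpace ℝ B] [CompleteSpace B]
    (ι : D →L[ℝ] B)
    (t r : ℝ) (htr : t ≤ r)
    (U : ℝ → ℝ → B →L[ℝ] B) (UD : ℝ → ℝ → D →L[ℝ] D) (A : ℝ → D →L[ℝ] B)
    (hcompat : ∀ (u v : ℝ) (f : D), U u v (ι f) = ι (UD u v f))
    (hid : ∀ u : ℝ, U u u = ContinuousLinearMap.id ℝ B)
    -- generation of `U` by `A` on the invariant domain `D`: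
    (hgen_bwd : ∀ (f : D), ∀ s ∈ Set.Icc t r,
      HasDerivWithinAt (fun u : ℝ => U u r (ι f)) (-(A s (UD s r f))) (Set.Icc t r) s)
    -- a weak-* continuous solution of the dual Cauchy problem:
    (ξ : ℝ → StrongDual ℝ B)
    (hξcont : ∀ b : B, ContinuousOn (fun s : ℝ => ξ s b) (Set.Icc t r))
    (hξeq : ∀ (f : D), ∀ s ∈ Set.Icc t r,
      HasDerivWithinAt (fun u : ℝ => ξ u (ι f)) (ξ s (A s f)) (Set.Icc t r) s) :
    (∀ (f : D), ∀ s ∈ Set.Icc t r, ξ s (ι (UD s r f)) = ξ t (ι (UD t r f))) ∧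
    (∀ f : D, ξ r (ι f) = ξ t (U t r (ι f))) := by
  obtain ⟨C, hC⟩ := exists_forall_opNorm_le_of_continuousOn_apply isCompact_Icc hξcont
  have hconst : ∀ f : D, ∀ s ∈ Icc t r, ξ s (U s r (ι f)) = ξ t (U t r (ι f)) := by
    intro f
    refine constant_of_hasDerivWithinAt_zero fun s hs => ?_
    have hpair := (hgen_bwd f s hs).clm_apply_of_weakStar
      (eventually_mem_nhdsWithin.mono fun u hu => hC u hu)
      (by simpa only [hcompat] using hξeq (UD s r f) s hs) (hξcont _ s hs)
    simpa using hpair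
  refine ⟨fun f s hs => by simpa only [hcompat] using hconst f s hs, fun f => ?_⟩
  simpa [hid] using hconst f r ⟨htr, le_rfl⟩

/-- basic duality, constancy lemma: if `U^{t,r}` is a strongly
continuous backward propagator on `B` with invariant dense domain `D` (embedded
via `ι`), generated on `D` by the strongly continuous family `A_t`, and `ξ_s`
is a weak-* continuous curve in `B*` solving `d/ds (f,ξ_s) = (A_s f, ξ_s)` for
`f ∈ D`, then `s ↦ (U^{s,r} f, ξ_s)` is constant on `[t,r]`; in particular
`(f, ξ_r) = (U^{t,r} f, ξ_t)`. -/
theorem dual_pairing_constant_along_propagator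
    {D B : Type*} [NormedAddCommGroup D] [NormedSpace ℝ D]
    [NormedAddCommGroup B] [NormedSpace ℝ B] [CompleteSpace B]
    (ι : D →L[ℝ] B) (hιinj : Function.Injective ι) (hιdense : DenseRange ι)
    (hιnorm : ∀ f : D, ‖ι f‖ ≤ ‖f‖)
    (t r : ℝ) (htr : t ≤ r)
    (U : ℝ → ℝ → B →L[ℝ] B) (UD : ℝ → ℝ → D →L[ℝ] D) (A : ℝ → D →L[ℝ] B)
    (hcompat : ∀ (u v : ℝ) (f : D), U u v (ι f) = ι (UD u v f))
    (hid : ∀ u : ℝ, U u u = ContinuousLinearMap.id ℝ B)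
    (hchain : ∀ u v w : ℝ, u ≤ v → v ≤ w → (U u v).comp (U v w) = U u w)
    (hUcont : ∀ b : B, Continuous fun p : ℝ × ℝ => U p.1 p.2 b)
    (hAcont : ∀ f : D, Continuous fun s : ℝ => A s f)
    -- generation of `U` by `A` on the invariant domain `D`:
    (hgen_fwd : ∀ (f : D), ∀ s ∈ Set.Icc t r,
      HasDerivWithinAt (fun u : ℝ => U t u (ι f)) (U t s (A s f)) (Set.Icc t r) s)
    (hgen_bwd : ∀ (f : D), ∀ s ∈ Set.Icc t r,
      HasDerivWithinAt (fun u : ℝ => U u r (ι f)) (-(A s (UD s r f))) (Set.Icc t r) s)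
    -- a weak-* continuous solution of the dual Cauchy problem:
    (ξ : ℝ → StrongDual ℝ B)
    (hξcont : ∀ b : B, ContinuousOn (fun s : ℝ => ξ s b) (Set.Icc t r))
    (hξeq : ∀ (f : D), ∀ s ∈ Set.Icc t r,
      HasDerivWithinAt (fun u : ℝ => ξ u (ι f)) (ξ s (A s f)) (Set.Icc t r) s) :
    (∀ (f : D), ∀ s ∈ Set.Icc t r, ξ s (ι (UD s r f)) = ξ t (ι (UD t r f))) ∧
    (∀ f : D, ξ r (ι f) = ξ t (U t r (ι f))) :=
  dual_pairing_constant_along_propagator_general ι t r htr U UD A hcompat hid hgen_bwd ξ hξcont hξeq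
end

section
/- Under the hypotheses of the previous statement (backward propagator U^{t,r} on B with invariant dense domain D, generated by strongly continuous {A_t}), the dual Cauchy problem is uniquely solvable: if ξ_s and η_s are two weak-* continuous curves in B* on [t,r] with ξ_t = η_t and both satisfying d/ds (f, ζ_s) = (A_s f, ζ_s) for all f ∈ D, then ξ_s = η_s for all s ∈ [t,r], and moreover ξ_s = V^{s,t} ξ_t where V^{s,t} = (U^{t,s})*. -/
open NormedSpace

section Aux

open Asymptotics Filter

/-- Product-rule-type lemma: if `ζ u` are uniformly bounded functionals on `s`,
`u ↦ ζ u g'` is continuous within `s` at `x`, and `g` has derivative `g'`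
within `s` at `x` with `g x = 0`, then `u ↦ ζ u (g u)` has derivative
`ζ x g'` within `s` at `x`. -/
lemma weak_deriv_pair {B : Type*} [NormedAddCommGroup B] [NormedSpace ℝ B]
    (ζ : ℝ → StrongDual ℝ B) (C : ℝ) (s : Set ℝ) (x : ℝ) (g : ℝ → B) (g' : B)
    (hC : ∀ u ∈ s, ‖ζ u‖ ≤ C)
    (hx : ContinuousWithinAt (fun u => ζ u g') s x)
    (hg : HasDerivWithinAt g g' s x) (hg0 : g x = 0) :
    HasDerivWithinAt (fun u => ζ u (g u)) (ζ x g') s x := by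
  rw [hasDerivWithinAt_iff_isLittleO] at hg ⊢
  simp only [hg0, sub_zero] at hg
  have heq : ∀ u : ℝ, ζ u (g u) - ζ x (g x) - (u - x) • ζ x g'
      = ζ u (g u - (u - x) • g') + (u - x) • (ζ u g' - ζ x g') := by
    intro u
    simp only [map_sub, map_smul, hg0, map_zero, smul_eq_mul]
    ring
  have hA : (fun u => ζ u (g u - (u - x) • g')) =o[nhdsWithin x s] fun u => u - x := by
    refine (Asymptotics.isBigO_iff.2 ⟨C, ?_⟩).trans_isLittleO hg
    filter_upwards [self_mem_nhdsWithin] with u hu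
    calc ‖ζ u (g u - (u - x) • g')‖ ≤ ‖ζ u‖ * ‖g u - (u - x) • g'‖ := (ζ u).le_opNorm _
      _ ≤ C * ‖g u - (u - x) • g'‖ :=
        mul_le_mul_of_nonneg_right (hC u hu) (norm_nonneg _)
  have hB : (fun u => (u - x) • (ζ u g' - ζ x g')) =o[nhdsWithin x s] fun u => u - x := by
    rw [Asymptotics.isLittleO_iff]
    intro ε hε
    have hx' : Tendsto (fun u => ζ u g') (nhdsWithin x s) (nhds (ζ x g')) := hx
    have h0 : Tendsto (fun u => ζ u g' - ζ x g') (nhdsWithin x s) (nhds 0) := by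
      simpa using hx'.sub (tendsto_const_nhds (x := ζ x g'))
    filter_upwards [NormedAddCommGroup.tendsto_nhds_zero.mp h0 ε hε] with u hu
    rw [norm_smul, mul_comm]
    exact mul_le_mul_of_nonneg_right hu.le (norm_nonneg _)
  exact ((hA.add hB).congr' (Filter.Eventually.of_forall fun u => (heq u).symm)
    Filter.EventuallyEq.rfl)

/-- Any weak-* continuous solution of the dual Cauchy problem is given by the
adjoint propagator, tested against elements of the dense range of `ι`. -/
lemma key_sol {D B : Type*} [NormedAddCommGroup D] [NormedSpace ℝ D]
    [NormedAddCommGroup B] [NormedSpace ℝ B] [CompleteSpace B]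
    (ι : D →L[ℝ] B) (t r : ℝ)
    (U : ℝ → ℝ → B →L[ℝ] B) (UD : ℝ → ℝ → D →L[ℝ] D) (A : ℝ → D →L[ℝ] B)
    (hcompat : ∀ (u v : ℝ) (f : D), U u v (ι f) = ι (UD u v f))
    (hid : ∀ u : ℝ, U u u = ContinuousLinearMap.id ℝ B)
    (hgen_bwd : ∀ (w : ℝ), w ∈ Set.Icc t r → ∀ (f : D), ∀ s ∈ Set.Icc t w,
      HasDerivWithinAt (fun u : ℝ => U u w (ι f)) (-(A s (UD s w f))) (Set.Icc t w) s)
    (ζ : ℝ → StrongDual ℝ B)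
    (hζcont : ∀ b : B, ContinuousOn (fun s : ℝ => ζ s b) (Set.Icc t r))
    (hζeq : ∀ (f : D), ∀ s ∈ Set.Icc t r,
      HasDerivWithinAt (fun u : ℝ => ζ u (ι f)) (ζ s (A s f)) (Set.Icc t r) s) :
    ∀ s ∈ Set.Icc t r, ∀ f : D, ζ s (ι f) = ζ t (U t s (ι f)) := by
  -- uniform bound on `‖ζ u‖` over the compact interval, by Banach–Steinhaus
  obtain ⟨C, hC⟩ : ∃ C, ∀ u ∈ Set.Icc t r, ‖ζ u‖ ≤ C := by
    have hpt : ∀ b : B, ∃ C, ∀ i : Set.Icc t r, ‖ζ i.1 b‖ ≤ C := by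
      intro b
      obtain ⟨C, hC⟩ := (isCompact_Icc (a := t) (b := r)).exists_bound_of_continuousOn
        (hζcont b)
      exact ⟨C, fun i => hC i.1 i.2⟩
    obtain ⟨C, hC⟩ := banach_steinhaus (g := fun i : Set.Icc t r => ζ i.1) hpt
    exact ⟨C, fun u hu => hC ⟨u, hu⟩⟩
  intro s hs f
  set h : ℝ → ℝ := fun u => ζ u (U u s (ι f)) with hh
  have hderiv : ∀ u₀ ∈ Set.Icc t s, HasDerivWithinAt h 0 (Set.Icc t s) u₀ := by
    intro u₀ hu₀
    have hu₀r : u₀ ∈ Set.Icc t r := ⟨hu₀.1, hu₀.2.trans hs.2⟩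
    set c := A u₀ (UD u₀ s f) with hc
    set b₀ := ι (UD u₀ s f) with hb₀def
    have hb₀ : U u₀ s (ι f) = b₀ := hcompat u₀ s f
    have hgB : HasDerivWithinAt (fun u => U u s (ι f) - b₀) (-c) (Set.Icc t s) u₀ :=
      (hgen_bwd s hs f u₀ hu₀).sub_const b₀
    have hA : HasDerivWithinAt (fun u => ζ u (U u s (ι f) - b₀)) (ζ u₀ (-c))
        (Set.Icc t s) u₀ := by
      refine weak_deriv_pair ζ C _ u₀ _ _
        (fun u hu => hC u ⟨hu.1, hu.2.trans hs.2⟩) ?_ hgB ?_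
      · exact ((hζcont (-c)).mono (Set.Icc_subset_Icc_right hs.2)) u₀ hu₀
      · rw [hb₀]; simp
    have hB : HasDerivWithinAt (fun u => ζ u b₀) (ζ u₀ c) (Set.Icc t s) u₀ :=
      (hζeq (UD u₀ s f) u₀ hu₀r).mono (Set.Icc_subset_Icc_right hs.2)
    have hsum : HasDerivWithinAt (fun u => ζ u (U u s (ι f) - b₀) + ζ u b₀) (ζ u₀ (-c) + ζ u₀ c)
        (Set.Icc t s) u₀ := hA.add hB
    have hfun : (fun u => ζ u (U u s (ι f) - b₀) + ζ u b₀) = h := by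
      funext u; simp [hh, map_sub]
    have hval : ζ u₀ (-c) + ζ u₀ c = 0 := by simp
    rw [hfun, hval] at hsum
    exact hsum
  have hcont : ContinuousOn h (Set.Icc t s) :=
    fun u hu => (hderiv u hu).continuousWithinAt
  have hconst := constant_of_has_deriv_right_zero hcont
    (fun u hu => (hderiv u ⟨hu.1, hu.2.le⟩).mono_of_mem_nhdsWithin (Icc_mem_nhdsGE_of_mem hu))
  have hst := hconst s (Set.right_mem_Icc.2 hs.1)
  have : ζ s (U s s (ι f)) = ζ t (U t s (ι f)) := hst
  rwa [hid s] at this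

end Aux

/-- The Banach-space adjoint (dual map) of a bounded operator `u : E →L[ℝ] F`,
acting on continuous duals by precomposition: `opDual u φ = φ ∘ u`. -/
noncomputable def opDual {E F : Type*} [NormedAddCommGroup E] [NormedSpace ℝ E]
    [NormedAddCommGroup F] [NormedSpace ℝ F] (u : E →L[ℝ] F) :
    StrongDual ℝ F →L[ℝ] StrongDual ℝ E :=
  (ContinuousLinearMap.compSL E F ℝ (RingHom.id ℝ) (RingHom.id ℝ)).flip u

/-- unique solvability of the dual Cauchy problem. Two weak-*
continuous curves in `B*` solving `d/ds (f,ζ_s) = (A_s f, ζ_s)` for `f ∈ D`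
with the same initial value coincide, and the solution is given by the adjoint
propagator: `ξ_s = V^{s,t} ξ_t` with `V^{s,t} = (U^{t,s})*`. -/
theorem dual_cauchy_problem_unique_solution
    {D B : Type*} [NormedAddCommGroup D] [NormedSpace ℝ D]
    [NormedAddCommGroup B] [NormedSpace ℝ B] [CompleteSpace B]
    (ι : D →L[ℝ] B) (hιinj : Function.Injective ι) (hιdense : DenseRange ι)
    (hιnorm : ∀ f : D, ‖ι f‖ ≤ ‖f‖)
    (t r : ℝ) (htr : t ≤ r)
    (U : ℝ → ℝ → B →L[ℝ] B) (UD : ℝ → ℝ → D →L[ℝ] D) (A : ℝ → D →L[ℝ] B)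
    (hcompat : ∀ (u v : ℝ) (f : D), U u v (ι f) = ι (UD u v f))
    (hid : ∀ u : ℝ, U u u = ContinuousLinearMap.id ℝ B)
    (hchain : ∀ u v w : ℝ, u ≤ v → v ≤ w → (U u v).comp (U v w) = U u w)
    (hUcont : ∀ b : B, Continuous fun p : ℝ × ℝ => U p.1 p.2 b)
    (hAcont : ∀ f : D, Continuous fun s : ℝ => A s f)
    -- generation of `U` by `A` on the invariant domain `D` (on all subintervals):
    (hgen_fwd : ∀ (t' : ℝ) (f : D), ∀ s ∈ Set.Icc t r, t' ≤ s →
      HasDerivWithinAt (fun u : ℝ => U t' u (ι f)) (U t' s (A s f)) (Set.Icc t' r) s)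
    (hgen_bwd : ∀ (w : ℝ), w ∈ Set.Icc t r → ∀ (f : D), ∀ s ∈ Set.Icc t w,
      HasDerivWithinAt (fun u : ℝ => U u w (ι f)) (-(A s (UD s w f))) (Set.Icc t w) s)
    -- two weak-* continuous solutions of the dual Cauchy problem:
    (ξ η : ℝ → StrongDual ℝ B)
    (hξcont : ∀ b : B, ContinuousOn (fun s : ℝ => ξ s b) (Set.Icc t r))
    (hηcont : ∀ b : B, ContinuousOn (fun s : ℝ => η s b) (Set.Icc t r))
    (hinit : ξ t = η t)
    (hξeq : ∀ (f : D), ∀ s ∈ Set.Icc t r,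
      HasDerivWithinAt (fun u : ℝ => ξ u (ι f)) (ξ s (A s f)) (Set.Icc t r) s)
    (hηeq : ∀ (f : D), ∀ s ∈ Set.Icc t r,
      HasDerivWithinAt (fun u : ℝ => η u (ι f)) (η s (A s f)) (Set.Icc t r) s) :
    (∀ s ∈ Set.Icc t r, ξ s = η s) ∧
    (∀ s ∈ Set.Icc t r, ξ s = opDual (U t s) (ξ t)) := by
  have kξ := key_sol ι t r U UD A hcompat hid hgen_bwd ξ hξcont hξeq
  have kη := key_sol ι t r U UD A hcompat hid hgen_bwd η hηcont hηeq
  have mξ : ∀ s ∈ Set.Icc t r, ξ s = opDual (U t s) (ξ t) := by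
    intro s hs
    have heqf : ⇑(ξ s) = ⇑(opDual (U t s) (ξ t)) :=
      hιdense.equalizer (ξ s).continuous (opDual (U t s) (ξ t)).continuous
        (by funext f; simpa [opDual] using kξ s hs f)
    exact ContinuousLinearMap.ext fun b => congrFun heqf b
  have mη : ∀ s ∈ Set.Icc t r, η s = opDual (U t s) (η t) := by
    intro s hs
    have heqf : ⇑(η s) = ⇑(opDual (U t s) (η t)) :=
      hιdense.equalizer (η s).continuous (opDual (U t s) (η t)).continuous
        (by funext f; simpa [opDual] using kη s hs f)
    exact ContinuousLinearMap.ext fun b => congrFun heqf b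
  refine ⟨fun s hs => ?_, mξ⟩
  rw [mξ s hs, mη s hs, hinit]
end
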